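/- arXiv:2102.10234 — 2 statements merged into one kernel-verified Lean document; each statement's English description precedes it below -/
import Mathlib

section
/- Let F be a class of functions f : X → ℝ on a finite sample x_1,…,x_m, let σ : ℝ → ℝ be L-Lipschitz with σ(0) = 0, and define the empirical Rademacher complexity R̂(F) = E_ε[(1/m) sup_{f ∈ F} |∑_{j=1}^m ε_j f(x_j)|]. Then R̂(σ ∘ F) ≤ 2L · R̂(F), where σ ∘ F = {σ ∘ f : f ∈ F}. -/
/-- A sign vector built from a Boolean choice: the canonical model of a tuple of
independent Rademacher variables. -/
def signVec (m : ℕ) (s : Fin m → Bool) : Fin m → ℝ :=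
  fun i => if s i then 1 else -1

/-- Expectation over `m` i.i.d. Rademacher variables (uniform average over all
`2^m` sign patterns). -/
noncomputable def radE (m : ℕ) (F : (Fin m → ℝ) → ℝ) : ℝ :=
  (∑ s : Fin m → Bool, F (signVec m s)) / 2 ^ m

/-!
Removing the absolute value costs the factor 2: after adjoining the zero function to the class
(whose image under `σ` is again zero), both suprema of `± ∑ ε_j σ (f (x_j))` are nonnegative, and
`ε ↦ -ε` preserves the uniform distribution on sign patterns. The signed inequality is the
Ledoux–Talagrand contraction: `σ` is replaced by `t ↦ L t` one coordinate `k` at a time. Pairing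
each sign pattern with the one flipped at `k` reduces this step to
`sup (G + σ ∘ a) + sup (G - σ ∘ a) ≤ sup (G + L a) + sup (G - L a)`, which holds pair of indices by
pair of indices because `σ` is `L`-Lipschitz.
-/

open Finset Function Set

lemma signVec_not (m : ℕ) (s : Fin m → Bool) : signVec m (fun j => !s j) = -signVec m s := by
  funext j
  cases h : s j <;> simp [signVec, h]

lemma signVec_update (m : ℕ) (s : Fin m → Bool) (k : Fin m) (b : Bool) :
    signVec m (update s k b) = update (signVec m s) k (if b then 1 else -1) := by
  funext j
  by_cases h : j = k
  · subst h; simp [signVec]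
  · simp [signVec, h]

lemma sum_update_mul_update {n : Type*} [Fintype n] [DecidableEq n] {α : Type*}
    (e : n → ℝ) (Ψ : n → α → ℝ) (a : n → α) (k : n) (b : ℝ) (g : α → ℝ) :
    ∑ j, update e k b j * update Ψ k g j (a j) = ∑ j, update e k 0 j * Ψ j (a j) + b * g (a k) := by
  rw [Fintype.sum_eq_add_sum_compl k, Fintype.sum_eq_add_sum_compl k (fun j => update e k 0 j * _)]
  simp only [update_self, zero_mul, zero_add, add_comm]
  congr 1
  refine Finset.sum_congr rfl fun j hj => ?_
  have : j ≠ k := by simpa using hj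
  simp [this]

lemma Function.Involutive.sum_le_sum_of_add_comp_le {α : Type*} [Fintype α] {τ : α → α}
    (hτ : Involutive τ) {F G : α → ℝ} (h : ∀ a, F a + F (τ a) ≤ G a + G (τ a)) :
    ∑ a, F a ≤ ∑ a, G a := by
  have := Finset.sum_le_sum fun a (_ : a ∈ Finset.univ) => h a
  rw [sum_add_distrib, sum_add_distrib, hτ.bijective.sum_comp F, hτ.bijective.sum_comp G] at this
  linarith

lemma bddAbove_range_sum_mul {κ n : Type*} [Fintype n] (e : n → ℝ) {c : κ → n → ℝ}
    (hc : ∀ j, BddAbove (range fun i => |c i j|)) : BddAbove (range fun i => ∑ j, e j * c i j) := by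
  choose C hC using hc
  refine ⟨∑ j, |e j| * C j, forall_mem_range.2 fun i => ?_⟩
  calc ∑ j, e j * c i j ≤ ∑ j, |e j * c i j| := sum_le_sum fun j _ => le_abs_self _
    _ ≤ ∑ j, |e j| * C j := sum_le_sum fun j _ => by
        rw [abs_mul]; exact mul_le_mul_of_nonneg_left (hC j ⟨i, rfl⟩) (abs_nonneg _)

lemma ciSup_add_ciSup_sub_le {ι : Type*} [Nonempty ι] {G a : ι → ℝ} {φ : ℝ → ℝ} {L : ℝ}
    (hφ : ∀ s t, |φ s - φ t| ≤ L * |s - t|) (hadd : BddAbove (range fun i => G i + L * a i))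
    (hsub : BddAbove (range fun i => G i - L * a i)) :
    (⨆ i, G i + φ (a i)) + (⨆ i, G i - φ (a i)) ≤
      (⨆ i, G i + L * a i) + ⨆ i, G i - L * a i := by
  have pair : ∀ i i', G i + φ (a i) + (G i' - φ (a i')) ≤
      (⨆ i, G i + L * a i) + ⨆ i, G i - L * a i := by
    intro i i'
    have hlip := (abs_le.1 (hφ (a i) (a i'))).2
    rcases le_total (a i') (a i) with h | h
    · rw [abs_of_nonneg (sub_nonneg.2 h)] at hlip
      have := add_le_add (le_ciSup hadd i) (le_ciSup hsub i')
      linarith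
    · rw [abs_of_nonpos (sub_nonpos.2 h)] at hlip
      have := add_le_add (le_ciSup hadd i') (le_ciSup hsub i)
      linarith
  rw [← le_sub_iff_add_le]
  refine ciSup_le fun i => le_sub_iff_add_le.2 ?_
  rw [add_comm, ← le_sub_iff_add_le]
  exact ciSup_le fun i' => le_sub_iff_add_le.2 (by linarith [pair i i'])

lemma sum_iSup_signVec_le_update {κ : Type*} [Nonempty κ] {m : ℕ} (A : κ → Fin m → ℝ)
    (Φ : Fin m → ℝ → ℝ) (k : Fin m) {L : ℝ} (hk : ∀ s t, |Φ k s - Φ k t| ≤ L * |s - t|)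
    (hbdd : ∀ j, BddAbove (range fun i => |update Φ k (L * ·) j (A i j)|)) :
    ∑ s, ⨆ i, ∑ j, signVec m s j * Φ j (A i j) ≤
      ∑ s, ⨆ i, ∑ j, signVec m s j * update Φ k (L * ·) j (A i j) := by
  have hflip : Involutive fun s : Fin m → Bool => update s k (!s k) := fun s => by simp
  refine hflip.sum_le_sum_of_add_comp_le fun s => ?_
  set G := fun i => ∑ j, update (signVec m s) k 0 j * Φ j (A i j)
  have hsum : ∀ b g i, ∑ j, signVec m (update s k b) j * update Φ k g j (A i j) =
      G i + (if b then 1 else -1) * g (A i k) := by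
    intro b g i
    rw [signVec_update, sum_update_mul_update]
  have hbdd' : ∀ b : Bool, BddAbove (range fun i => G i + (if b then 1 else -1) * (L * A i k)) := by
    intro b
    simpa only [hsum] using bddAbove_range_sum_mul (signVec m (update s k b)) hbdd
  have hΦ : ∀ b i, ∑ j, signVec m (update s k b) j * Φ j (A i j) =
      G i + (if b then 1 else -1) * Φ k (A i k) :=
    fun b i => by simpa only [update_eq_self] using hsum b (Φ k) i
  have hkey := ciSup_add_ciSup_sub_le (G := G) (a := (A · k)) hk
    (by simpa using hbdd' true) (by simpa [sub_eq_add_neg] using hbdd' false)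
  -- rewriting `s` as `update s k (s k)` puts both patterns of the pair in the shape of `hsum`
  have hs := update_eq_self k s
  cases hb : s k <;> rw [hb] at hs <;> rw [← hs] <;>
    simp only [hsum, hΦ, update_idem, Bool.not_false, Bool.not_true, if_true, if_false,
      Bool.false_eq_true, one_mul, neg_one_mul, ← sub_eq_add_neg]
  · rw [add_comm, add_comm (⨆ i, G i - L * A i k)]
    exact hkey
  · exact hkey

lemma BddAbove.abs_comp_of_lipschitz {ι : Type*} {a : ι → ℝ} (ha : BddAbove (range fun i => |a i|))
    {φ : ℝ → ℝ} {L : ℝ} (hL : 0 ≤ L) (hφ : ∀ s t, |φ s - φ t| ≤ L * |s - t|) :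
    BddAbove (range fun i => |φ (a i)|) := by
  obtain ⟨C, hC⟩ := ha
  refine ⟨|φ 0| + L * C, forall_mem_range.2 fun i => ?_⟩
  have hlip := hφ (a i) 0
  rw [sub_zero] at hlip
  have hCi := mul_le_mul_of_nonneg_left (hC ⟨i, rfl⟩) hL
  linarith [abs_sub_abs_le_abs_sub (φ (a i)) (φ 0)]

lemma sum_iSup_signVec_comp_le {κ : Type*} [Nonempty κ] {m : ℕ} (A : κ → Fin m → ℝ)
    (hA : ∀ j, BddAbove (range fun i => |A i j|)) (σ : ℝ → ℝ) {L : ℝ} (hL : 0 ≤ L)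
    (hσ : ∀ s t, |σ s - σ t| ≤ L * |s - t|) :
    ∑ s, ⨆ i, ∑ j, signVec m s j * σ (A i j) ≤ ∑ s, ⨆ i, ∑ j, signVec m s j * (L * A i j) := by
  let Φ : Finset (Fin m) → Fin m → ℝ → ℝ := fun T j => if j ∈ T then (L * ·) else σ
  have hΦ : ∀ T j s t, |Φ T j s - Φ T j t| ≤ L * |s - t| := by
    intro T j s t
    by_cases hj : j ∈ T
    · simp [Φ, hj, ← mul_sub, abs_mul, abs_of_nonneg hL]
    · simpa [Φ, hj] using hσ s t
  have hinsert : ∀ T k, k ∉ T → Φ (insert k T) = update (Φ T) k (L * ·) := by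
    intro T k hk
    funext j
    by_cases hj : j = k
    · subst hj; simp [Φ]
    · simp [Φ, hj]
  have hmono : ∀ T, ∑ s, ⨆ i, ∑ j, signVec m s j * Φ ∅ j (A i j) ≤
      ∑ s, ⨆ i, ∑ j, signVec m s j * Φ T j (A i j) := by
    intro T
    induction T using Finset.induction_on with
    | empty => rfl
    | insert k T hk ih =>
      refine ih.trans ?_
      rw [hinsert T k hk]
      refine sum_iSup_signVec_le_update A (Φ T) k (hΦ T k) ?_
      rw [← hinsert T k hk]
      exact fun j => (hA j).abs_comp_of_lipschitz hL (hΦ _ j)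
  simpa [Φ] using hmono Finset.univ

lemma bddAbove_range_abs_option_elim {ι n : Type*} {B : ι → n → ℝ} {j : n}
    (h : BddAbove (range fun i => |B i j|)) :
    BddAbove (range fun o : Option ι => |o.elim 0 B j|) := by
  rw [Option.range_eq]
  exact h.insert _

lemma iSup_abs_le_iSup_add_iSup_neg {ι : Type*} (Y : Option ι → ℝ) (h0 : Y none = 0)
    (hY : BddAbove (range Y)) (hY' : BddAbove (range fun o => -Y o)) :
    ⨆ i, |Y (some i)| ≤ (⨆ o, Y o) + ⨆ o, -Y o := by
  have hpos : 0 ≤ ⨆ o, Y o := h0 ▸ le_ciSup hY none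
  have hneg : 0 ≤ ⨆ o, -Y o := by simpa [h0] using le_ciSup hY' none
  refine Real.iSup_le (fun i => abs_le.2 ⟨?_, ?_⟩) (add_nonneg hpos hneg)
  · linarith [le_ciSup hY' (some i)]
  · linarith [le_ciSup hY (some i)]

lemma sum_iSup_abs_le_two_mul_sum_iSup_option {ι : Type*} {m : ℕ} (B : ι → Fin m → ℝ)
    (hB : ∀ j, BddAbove (range fun i => |B i j|)) :
    ∑ s, ⨆ i, |∑ j, signVec m s j * B i j| ≤
      2 * ∑ s, ⨆ o : Option ι, ∑ j, signVec m s j * o.elim 0 B j := by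
  have hcol := fun j => bddAbove_range_abs_option_elim (hB j)
  have hneg : ∀ (s : Fin m → Bool) (o : Option ι), -∑ j, signVec m s j * o.elim 0 B j =
      ∑ j, signVec m (fun j => !s j) j * o.elim 0 B j := by
    simp [signVec_not, ← sum_neg_distrib]
  have hnot : Involutive fun (s : Fin m → Bool) j => !s j := fun s => by simp
  calc ∑ s, ⨆ i, |∑ j, signVec m s j * B i j|
      ≤ ∑ s, ((⨆ o : Option ι, ∑ j, signVec m s j * o.elim 0 B j) +
          ⨆ o : Option ι, ∑ j, signVec m (fun j => !s j) j * o.elim 0 B j) := by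
        refine sum_le_sum fun s _ => ?_
        simp only [← hneg]
        exact iSup_abs_le_iSup_add_iSup_neg _ (by simp) (bddAbove_range_sum_mul _ hcol)
          (by simpa only [hneg] using bddAbove_range_sum_mul _ hcol)
    _ = 2 * ∑ s, ⨆ o : Option ι, ∑ j, signVec m s j * o.elim 0 B j := by
        rw [sum_add_distrib, hnot.bijective.sum_comp
          (fun s => ⨆ o : Option ι, ∑ j, signVec m s j * o.elim 0 B j)]
        ring

lemma iSup_option_sum_mul_le {ι n : Type*} [Fintype n] (e : n → ℝ) (c : ι → n → ℝ)
    (hc : BddAbove (range fun i => |∑ j, e j * c i j|)) {L : ℝ} (hL : 0 ≤ L) :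
    ⨆ o : Option ι, ∑ j, e j * (L * o.elim 0 c j) ≤ L * ⨆ i, |∑ j, e j * c i j| := by
  refine Real.iSup_le ?_ (mul_nonneg hL (Real.iSup_nonneg fun _ => abs_nonneg _))
  rintro (_ | i)
  · simpa using mul_nonneg hL (Real.iSup_nonneg fun _ => abs_nonneg _)
  · have : ∑ j, e j * (L * c i j) = L * ∑ j, e j * c i j := by
      rw [mul_sum]; exact sum_congr rfl fun j _ => by ring
    simp only [Option.elim_some, this]
    exact mul_le_mul_of_nonneg_left ((le_abs_self _).trans (le_ciSup hc i)) hL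

theorem radE_contraction_general {X : Type*} {m : ℕ} {ι : Type*}
    (f : ι → X → ℝ) (x : Fin m → X) (σ : ℝ → ℝ) (L : ℝ) (hL : 0 ≤ L)
    (hlip : ∀ a b : ℝ, |σ a - σ b| ≤ L * |a - b|) (h0 : σ 0 = 0)
    (hb : ∀ ε : Fin m → ℝ,
      BddAbove (Set.range fun i : ι => |∑ j : Fin m, ε j * f i (x j)|)) :
    radE m (fun ε => (⨆ i : ι, |∑ j : Fin m, ε j * σ (f i (x j))|) / m) ≤
      2 * L * radE m (fun ε => (⨆ i : ι, |∑ j : Fin m, ε j * f i (x j)|) / m) := by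
  have hcol : ∀ j, BddAbove (range fun i => |f i (x j)|) := fun j => by
    simpa [Pi.single_apply, ite_mul] using hb (Pi.single j 1)
  let A : Option ι → Fin m → ℝ := fun o => o.elim 0 fun i j => f i (x j)
  have hσA : ∀ o j, σ (A o j) = o.elim 0 (fun i j => σ (f i (x j))) j := by
    rintro (_ | i) j <;> simp [A, h0]
  have hsum : ∑ s, ⨆ i, |∑ j, signVec m s j * σ (f i (x j))| ≤
      2 * L * ∑ s, ⨆ i, |∑ j, signVec m s j * f i (x j)| := calc
    _ ≤ 2 * ∑ s, ⨆ o, ∑ j, signVec m s j * σ (A o j) := by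
      simpa only [hσA] using sum_iSup_abs_le_two_mul_sum_iSup_option _
        fun j => (hcol j).abs_comp_of_lipschitz hL hlip
    _ ≤ 2 * ∑ s, ⨆ o, ∑ j, signVec m s j * (L * A o j) := by
      gcongr 2 * ?_
      exact sum_iSup_signVec_comp_le A (fun j => bddAbove_range_abs_option_elim (hcol j)) σ hL hlip
    _ ≤ 2 * ∑ s, L * ⨆ i, |∑ j, signVec m s j * f i (x j)| := by
      gcongr with s
      exact iSup_option_sum_mul_le _ _ (hb _) hL
    _ = 2 * L * ∑ s, ⨆ i, |∑ j, signVec m s j * f i (x j)| := by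
      rw [← mul_sum]; ring
  simp only [radE, ← sum_div, mul_div_assoc']
  gcongr

/-- Rademacher contraction (with absolute values): composing the
class with an `L`-Lipschitz function `σ` vanishing at `0` at most doubles the
empirical Rademacher complexity up to the factor `L`. -/
theorem radE_contraction {X : Type*} {m : ℕ} {ι : Type*} [Nonempty ι]
    (f : ι → X → ℝ) (x : Fin m → X) (σ : ℝ → ℝ) (L : ℝ) (hL : 0 ≤ L)
    (hlip : ∀ a b : ℝ, |σ a - σ b| ≤ L * |a - b|) (h0 : σ 0 = 0)
    (hb : ∀ ε : Fin m → ℝ,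
      BddAbove (Set.range fun i : ι => |∑ j : Fin m, ε j * f i (x j)|)) :
    radE m (fun ε => (⨆ i : ι, |∑ j : Fin m, ε j * σ (f i (x j))|) / m) ≤
      2 * L * radE m (fun ε => (⨆ i : ι, |∑ j : Fin m, ε j * f i (x j)|) / m) :=
  radE_contraction_general f x σ L hL hlip h0 hb
end

section
/- Consider the class of linear two-layer networks f_w,c(x) = L² · c · ⟨x, w⟩ on ℝ^d with constraints ‖w‖₂ ≤ R and |c| ≤ D, evaluated on the fixed sample x_1 = ⋯ = x_m = B·e_1 (B > 0, e_1 the first standard basis vector). Then the empirical Rademacher complexity of this class on the sample equals L²BRD · E_ε[|∑_{i=1}^m ε_i|]/m, which is at least L²BRD/(√2 · √m). -/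
open scoped RealInnerProductSpace

open Finset

lemma key_choose (j : ℕ) :
    (j+1)*(j+2) * Nat.choose (2*j+3) (j+1) = (2*j+2)*(2*j+3) * Nat.choose (2*j+1) j := by
  have h1 := Nat.add_one_mul_choose_eq (2*j+1) j
  have h2 := Nat.add_one_mul_choose_eq (2*j+2) (j+1)
  have h3 : Nat.choose (2*j+3) (j+2) = Nat.choose (2*j+3) (j+1) := by
    rw [← Nat.choose_symm (show j+1 ≤ 2*j+3 by omega)]; congr 1; omega
  have e1 : 2*j+1+1 = 2*j+2 := by omega
  have e2 : 2*j+2+1 = 2*j+3 := by omega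
  rw [e1] at h1; rw [e2] at h2
  rw [h3] at h2
  calc (j+1)*(j+2) * Nat.choose (2*j+3) (j+1)
      = (j+1) * (Nat.choose (2*j+3) (j+1) * (j+2)) := by ring
    _ = (j+1) * ((2*j+3) * Nat.choose (2*j+2) (j+1)) := by rw [← h2]
    _ = (2*j+3) * (Nat.choose (2*j+2) (j+1) * (j+1)) := by ring
    _ = (2*j+3) * ((2*j+2) * Nat.choose (2*j+1) j) := by rw [← h1]
    _ = (2*j+2)*(2*j+3) * Nat.choose (2*j+1) j := by ring

lemma odd_ineq (j : ℕ) : 16^j ≤ (j+1) * (Nat.choose (2*j+1) j)^2 := by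
  induction j with
  | zero => simp
  | succ j ih =>
    have hk := key_choose j
    have h2 : 2*(j+1)+1 = 2*j+3 := by omega
    rw [h2]
    set c := Nat.choose (2*j+1) j with hc
    set c' := Nat.choose (2*j+3) (j+1) with hc'
    have key : ((j+1)*(j+2))^2 * ((j+2) * c'^2) = (j+2)*((2*j+2)*(2*j+3))^2 * c^2 := by
      calc ((j+1)*(j+2))^2 * ((j+2) * c'^2) = (j+2) * ((j+1)*(j+2)*c')^2 := by ring
        _ = (j+2) * ((2*j+2)*(2*j+3)*c)^2 := by rw [hk]
        _ = (j+2)*((2*j+2)*(2*j+3))^2 * c^2 := by ring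
    have hle : ((j+1)*(j+2))^2 * 16^(j+1) ≤ (j+2)*((2*j+2)*(2*j+3))^2 * c^2 := by
      have step1 : ((j+1)*(j+2))^2 * 16^(j+1) ≤ ((j+1)*(j+2))^2 * 16 * ((j+1)*c^2) := by
        have : 16^(j+1) = 16 * 16^j := by ring
        rw [this]
        calc ((j+1)*(j+2))^2 * (16 * 16^j) = ((j+1)*(j+2))^2 * 16 * 16^j := by ring
          _ ≤ ((j+1)*(j+2))^2 * 16 * ((j+1)*c^2) := Nat.mul_le_mul_left _ ih
      refine step1.trans ?_
      have hq : 4*(j+1)*(j+2) ≤ (2*j+3)^2 := by nlinarith []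
      calc ((j+1)*(j+2))^2 * 16 * ((j+1)*c^2)
          = (4*(j+1)*(j+2)) * (4*(j+1)^2*(j+2)) * c^2 := by ring
        _ ≤ (2*j+3)^2 * (4*(j+1)^2*(j+2)) * c^2 := by
            exact Nat.mul_le_mul_right _ (Nat.mul_le_mul_right _ hq)
        _ = (j+2)*((2*j+2)*(2*j+3))^2 * c^2 := by ring
    have := hle.trans_eq key.symm
    exact Nat.le_of_mul_le_mul_left this (by positivity)

lemma central_two (j : ℕ) : Nat.choose (2*j+2) (j+1) = 2 * Nat.choose (2*j+1) j := by
  have h : Nat.choose (2*j+2) (j+1) = Nat.choose (2*j+1) j + Nat.choose (2*j+1) (j+1) :=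
    Nat.choose_succ_succ (2*j+1) j
  have hs : Nat.choose (2*j+1) (j+1) = Nat.choose (2*j+1) j := by
    rw [← Nat.choose_symm (show j+1 ≤ 2*j+1 by omega)]; congr 1; omega
  omega

lemma main_nat_ineq (t : ℕ) : 4^t ≤ 2*(t+1) * (Nat.choose t (t/2))^2 := by
  rcases Nat.even_or_odd t with ⟨j, hj⟩ | ⟨j, hj⟩
  · rcases Nat.eq_zero_or_pos j with rfl | hjp
    · subst hj; simp
    · obtain ⟨i, rfl⟩ : ∃ i, j = i + 1 := ⟨j - 1, by omega⟩
      have ht : t = 2*i+2 := by omega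
      subst ht
      have hd : (2*i+2)/2 = i+1 := by omega
      rw [hd, central_two i]
      have ho := odd_ineq i
      have h16 : (16:ℕ)^i = 4^(2*i) := by rw [pow_mul]; norm_num
      have h4 : (4:ℕ)^(2*i+2) = 16 * 4^(2*i) := by ring
      rw [h4, ← h16]
      set c := Nat.choose (2*i+1) i
      calc 16 * 16^i ≤ 16 * ((i+1)*c^2) := Nat.mul_le_mul_left _ ho
        _ ≤ 2*(2*i+2+1) * (2*c)^2 := by nlinarith []
  · have ht : t = 2*j+1 := by omega
    subst ht
    have hd : (2*j+1)/2 = j := by omega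
    rw [hd]
    have ho := odd_ineq j
    have h16 : (16:ℕ)^j = 4^(2*j) := by rw [pow_mul]; norm_num
    have h4 : (4:ℕ)^(2*j+1) = 4 * 4^(2*j) := by ring
    rw [h4, ← h16]
    calc 4 * 16^j ≤ 4 * ((j+1) * (Nat.choose (2*j+1) j)^2) := Nat.mul_le_mul_left _ ho
      _ ≤ 2*(2*j+1+1) * (Nat.choose (2*j+1) j)^2 := by ring_nf; omega


-- sum over boolean vectors grouped by number of trues
lemma sum_bool_card {M : Type*} [AddCommMonoid M] (m : ℕ) (f : ℕ → M) :
    ∑ s : Fin m → Bool, f (#(univ.filter fun i => s i)) =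
      ∑ k ∈ range (m+1), m.choose k • f k := by
  have hbij : Function.Bijective (fun (A : Finset (Fin m)) => (fun i => (i ∈ A : Bool))) := by
    constructor
    · intro A B h
      ext i
      have := congrFun h i
      simpa using this
    · intro s
      exact ⟨univ.filter fun i => s i, by ext i; simp⟩
  have h1 : ∑ s : Fin m → Bool, f (#(univ.filter fun i => s i)) =
      ∑ A : Finset (Fin m), f #A := by
    rw [← Fintype.sum_bijective _ hbij]
    intro A
    congr 1
    congr 1
    ext i; simp
  rw [h1]
  have h2 : ∑ A : Finset (Fin m), f #A = ∑ A ∈ (univ : Finset (Fin m)).powerset, f #A := by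
    rw [powerset_univ]
  rw [h2, sum_powerset_apply_card]
  simp

-- reflection: ∑ C(m,k)(m-2k) = 0
lemma sum_choose_lin (m : ℕ) :
    ∑ k ∈ range (m+1), (m.choose k : ℤ) * (m - 2*k) = 0 := by
  have h := Finset.sum_range_reflect (fun k => (m.choose k : ℤ) * (m - 2*k)) (m+1)
  have h2 : ∀ k ∈ range (m+1), (fun k => (m.choose k : ℤ) * (m - 2*k)) (m + 1 - 1 - k)
      = -((m.choose k : ℤ) * (m - 2*k)) := by
    intro k hk
    rw [mem_range] at hk
    have hk' : k ≤ m := by omega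
    simp only
    rw [show m + 1 - 1 - k = m - k from by omega, Nat.choose_symm hk']
    push_cast [Nat.cast_sub hk']
    ring
  rw [Finset.sum_congr rfl h2, Finset.sum_neg_distrib] at h
  linarith [h]

-- telescoping identity
lemma tele (n j : ℕ) :
    (Nat.choose (n+1) (j+1) : ℤ) * ((n+1) - 2*(j+1))
      = (n+1) * Nat.choose n (j+1) - (n+1) * Nat.choose n j := by
  rcases le_or_gt j n with hj | hj
  · have hp : Nat.choose (n+1) (j+1) = Nat.choose n j + Nat.choose n (j+1) :=
      Nat.choose_succ_succ n j
    have hkey : Nat.choose n (j+1) * (j+1) = Nat.choose n j * (n - j) :=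
      Nat.choose_succ_right_eq n j
    have hkeyz : (Nat.choose n (j+1) : ℤ) * (j+1) = (Nat.choose n j : ℤ) * ((n:ℤ) - j) := by
      have := congrArg (fun x : ℕ => (x : ℤ)) hkey
      push_cast [Nat.cast_sub hj] at this
      linarith [this]
    have hpz : (Nat.choose (n+1) (j+1) : ℤ) = Nat.choose n j + Nat.choose n (j+1) := by
      exact_mod_cast congrArg (fun x : ℕ => (x : ℤ)) hp
    rw [hpz]
    linear_combination (-2 : ℤ) * hkeyz
  · have h1 : Nat.choose (n+1) (j+1) = 0 := Nat.choose_eq_zero_of_lt (by omega)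
    have h2 : Nat.choose n (j+1) = 0 := Nat.choose_eq_zero_of_lt (by omega)
    rcases eq_or_lt_of_le (show n + 1 ≤ j from hj) with rfl | hj2
    · have h3 : Nat.choose n (n+1) = 0 := Nat.choose_eq_zero_of_lt (by omega)
      simp [h1, h2, h3]
    · have h3 : Nat.choose n j = 0 := Nat.choose_eq_zero_of_lt (by omega)
      simp [h1, h2, h3]

lemma sum_abs_ident (m : ℕ) (hm : 1 ≤ m) :
    ∑ k ∈ range (m+1), (m.choose k : ℤ) * |(m:ℤ) - 2*k|
      = 2 * m * Nat.choose (m-1) ((m-1)/2) := by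
  obtain ⟨n, rfl⟩ : ∃ n, m = n + 1 := ⟨m - 1, by omega⟩
  set m := n + 1 with hmdef
  set K := n / 2 with hK
  have hm1 : m - 1 = n := by omega
  set G : ℕ → ℤ := fun k => if k = 0 then (0:ℤ) else (Nat.choose n (k-1) : ℤ) with hG
  -- step 1: S = 2A - B
  have habs : ∀ k ∈ range (m+1), (m.choose k : ℤ) * |(m:ℤ) - 2*k|
      = 2 * ((m.choose k : ℤ) * max ((m:ℤ) - 2*k) 0) - (m.choose k : ℤ) * ((m:ℤ) - 2*k) := by
    intro k _
    rcases le_total ((m:ℤ) - 2*k) 0 with h | h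
    · rw [abs_of_nonpos h, max_eq_right h]; ring
    · rw [abs_of_nonneg h, max_eq_left h]; ring
  rw [Finset.sum_congr rfl habs, Finset.sum_sub_distrib, sum_choose_lin, sub_zero,
    ← Finset.mul_sum]
  -- step 2: restrict to range (K+1)
  have hsub : range (K+1) ⊆ range (m+1) := by
    apply Finset.range_subset_range.2; omega
  have hzero : ∀ k ∈ range (m+1), k ∉ range (K+1) →
      (m.choose k : ℤ) * max ((m:ℤ) - 2*k) 0 = 0 := by
    intro k _ hk
    rw [mem_range, not_lt] at hk
    have h2 : (m:ℤ) - 2*k ≤ 0 := by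
      have : 2*(K+1) ≥ m := by omega
      have : 2*k ≥ m := by omega
      push_cast
      omega
    rw [max_eq_right h2, mul_zero]
  rw [← Finset.sum_subset hsub hzero]
  -- step 3: telescope
  have hterm : ∀ k ∈ range (K+1), (m.choose k : ℤ) * max ((m:ℤ) - 2*k) 0
      = (m:ℤ) * G (k+1) - (m:ℤ) * G k := by
    intro k hk
    rw [mem_range] at hk
    have hpos : (0:ℤ) ≤ (m:ℤ) - 2*k := by
      have : 2*k ≤ 2*K := by omega
      have : 2*K ≤ n := by omega
      push_cast
      omega
    rw [max_eq_left hpos]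
    rcases Nat.eq_zero_or_pos k with rfl | hkpos
    · simp [hG]
    · obtain ⟨j, rfl⟩ : ∃ j, k = j + 1 := ⟨k - 1, by omega⟩
      have := tele n j
      simp only [hG, if_neg (by omega : j + 1 + 1 ≠ 0), if_neg (by omega : j + 1 ≠ 0)]
      simp only [Nat.add_sub_cancel]
      rw [hmdef]
      push_cast at this ⊢
      linarith [this]
  rw [Finset.sum_congr rfl hterm, Finset.sum_range_sub (fun k => (m:ℤ) * G k)]
  simp only [hG, if_neg (by omega : K + 1 ≠ 0), if_pos rfl, Nat.add_sub_cancel, mul_zero, sub_zero]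
  rw [hm1]
  ring

lemma sup_eval {d m : ℕ} (L B R D : ℝ) (hL : 0 < L) (hB : 0 < B) (hR : 0 < R) (hD : 0 < D)
    (ε : Fin m → ℝ) :
    (⨆ p : {w : EuclideanSpace ℝ (Fin (d + 1)) // ‖w‖ ≤ R} × {c : ℝ // |c| ≤ D},
          |∑ i : Fin m, ε i *
            (L ^ 2 * (p.2 : ℝ) *
              ⟪(B • EuclideanSpace.single (0 : Fin (d + 1)) (1 : ℝ)),
                (p.1 : EuclideanSpace ℝ (Fin (d + 1)))⟫)|)
      = L ^ 2 * B * R * D * |∑ i : Fin m, ε i| := by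
  have hinner : ∀ w : EuclideanSpace ℝ (Fin (d+1)),
      ⟪(B • EuclideanSpace.single (0 : Fin (d + 1)) (1 : ℝ)), w⟫ = B * w 0 := by
    intro w
    rw [real_inner_smul_left, EuclideanSpace.inner_single_left]
    simp
  have hval : ∀ p : {w : EuclideanSpace ℝ (Fin (d + 1)) // ‖w‖ ≤ R} × {c : ℝ // |c| ≤ D},
      |∑ i : Fin m, ε i * (L ^ 2 * (p.2 : ℝ) *
        ⟪(B • EuclideanSpace.single (0 : Fin (d + 1)) (1 : ℝ)), (p.1 : EuclideanSpace ℝ (Fin (d+1)))⟫)|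
      = |∑ i : Fin m, ε i| * (L^2 * |( p.2 : ℝ)| * (B * |(p.1 : EuclideanSpace ℝ (Fin (d+1))) 0|)) := by
    intro p
    rw [← Finset.sum_mul]
    rw [abs_mul, hinner]
    congr 1
    rw [abs_mul, abs_mul, abs_mul]
    rw [abs_of_pos hB, abs_of_pos (pow_pos hL 2)]
  have habs0 : ∀ w : EuclideanSpace ℝ (Fin (d+1)), |w 0| ≤ ‖w‖ := by
    intro w
    have := EuclideanSpace.norm_eq w
    have h1 : |w 0| = Real.sqrt ((w 0)^2) := by
      rw [Real.sqrt_sq_eq_abs]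
    rw [h1, this]
    apply Real.sqrt_le_sqrt
    rw [← Finset.sum_erase_add _ _ (Finset.mem_univ (0 : Fin (d+1)))]
    have : ∀ i ∈ Finset.univ.erase (0 : Fin (d+1)), (0:ℝ) ≤ ‖w i‖^2 := fun i _ => by positivity
    have h2 : (0:ℝ) ≤ ∑ i ∈ Finset.univ.erase (0 : Fin (d+1)), ‖w i‖^2 :=
      Finset.sum_nonneg this
    have h3 : (w 0)^2 = ‖w 0‖^2 := by rw [Real.norm_eq_abs, sq_abs]
    linarith
  have hbound : ∀ p : {w : EuclideanSpace ℝ (Fin (d + 1)) // ‖w‖ ≤ R} × {c : ℝ // |c| ≤ D},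
      |∑ i : Fin m, ε i * (L ^ 2 * (p.2 : ℝ) *
        ⟪(B • EuclideanSpace.single (0 : Fin (d + 1)) (1 : ℝ)), (p.1 : EuclideanSpace ℝ (Fin (d+1)))⟫)|
      ≤ L ^ 2 * B * R * D * |∑ i : Fin m, ε i| := by
    intro p
    rw [hval p]
    have h1 : |(p.1 : EuclideanSpace ℝ (Fin (d+1))) 0| ≤ R := (habs0 _).trans p.1.2
    have h2 : |(p.2 : ℝ)| ≤ D := p.2.2
    have h3 : (0:ℝ) ≤ |(p.1 : EuclideanSpace ℝ (Fin (d+1))) 0| := abs_nonneg _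
    have h4 : (0:ℝ) ≤ |(p.2 : ℝ)| := abs_nonneg _
    have h5 : (0:ℝ) ≤ |∑ i : Fin m, ε i| := abs_nonneg _
    have h6 : |(p.2 : ℝ)| * |(p.1 : EuclideanSpace ℝ (Fin (d+1))) 0| ≤ D * R :=
      mul_le_mul h2 h1 h3 hD.le
    calc |∑ i : Fin m, ε i| * (L ^ 2 * |(p.2 : ℝ)| * (B * |(p.1 : EuclideanSpace ℝ (Fin (d+1))) 0|))
        = (L^2 * B * |∑ i : Fin m, ε i|) * (|(p.2 : ℝ)| * |(p.1 : EuclideanSpace ℝ (Fin (d+1))) 0|) := by ring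
      _ ≤ (L^2 * B * |∑ i : Fin m, ε i|) * (D * R) := by
          apply mul_le_mul_of_nonneg_left h6
          positivity
      _ = L ^ 2 * B * R * D * |∑ i : Fin m, ε i| := by ring
  -- the maximizing point
  have hsingle : ‖EuclideanSpace.single (0 : Fin (d+1)) (1:ℝ)‖ = 1 := by
    rw [EuclideanSpace.norm_single]; norm_num
  set w₀ : EuclideanSpace ℝ (Fin (d+1)) := R • EuclideanSpace.single (0 : Fin (d+1)) (1:ℝ) with hw₀
  have hw₀norm : ‖w₀‖ ≤ R := by
    rw [hw₀, norm_smul, hsingle, Real.norm_eq_abs, abs_of_pos hR, mul_one]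
  have hc₀ : |D| ≤ D := by rw [abs_of_pos hD]
  set p₀ : {w : EuclideanSpace ℝ (Fin (d + 1)) // ‖w‖ ≤ R} × {c : ℝ // |c| ≤ D} :=
    (⟨w₀, hw₀norm⟩, ⟨D, hc₀⟩) with hp₀
  have hw₀0 : w₀ 0 = R := by
    rw [hw₀]
    simp [EuclideanSpace.single_apply]
  have hvalp₀ : |∑ i : Fin m, ε i * (L ^ 2 * ((p₀.2 : ℝ)) *
        ⟪(B • EuclideanSpace.single (0 : Fin (d + 1)) (1 : ℝ)), (p₀.1 : EuclideanSpace ℝ (Fin (d+1)))⟫)|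
      = L ^ 2 * B * R * D * |∑ i : Fin m, ε i| := by
    rw [hval p₀]
    simp only [hp₀]
    rw [hw₀0, abs_of_pos hD, abs_of_pos hR]
    ring
  haveI : Nonempty ({w : EuclideanSpace ℝ (Fin (d + 1)) // ‖w‖ ≤ R} × {c : ℝ // |c| ≤ D}) :=
    ⟨p₀⟩
  apply le_antisymm
  · exact ciSup_le hbound
  · calc L ^ 2 * B * R * D * |∑ i : Fin m, ε i|
        = _ := hvalp₀.symm
      _ ≤ _ := le_ciSup ⟨_, by rintro x ⟨p, rfl⟩; exact hbound p⟩ p₀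

section Aux

lemma signVec_sum (m : ℕ) (s : Fin m → Bool) :
    ∑ i : Fin m, (if s i then (1:ℝ) else -1) = 2 * (#(univ.filter fun i => s i) : ℝ) - m := by
  have h : ∀ i : Fin m, (if s i then (1:ℝ) else -1) = 2 * (if s i then (1:ℝ) else 0) - 1 := by
    intro i; by_cases h : s i <;> norm_num [h]
  rw [Finset.sum_congr rfl (fun i _ => h i), Finset.sum_sub_distrib, ← Finset.mul_sum]
  rw [Finset.sum_boole]
  simp [Finset.filter_mem_eq_inter]

lemma sum_abs_signVec (m : ℕ) (hm : 1 ≤ m) :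
    ∑ s : Fin m → Bool, |∑ i : Fin m, (if s i then (1:ℝ) else -1)|
      = 2 * m * Nat.choose (m-1) ((m-1)/2) := by
  have h1 : ∀ s : Fin m → Bool, |∑ i : Fin m, (if s i then (1:ℝ) else -1)|
      = (fun k : ℕ => |2 * (k:ℝ) - m|) (#(univ.filter fun i => s i)) := by
    intro s; rw [signVec_sum]
  rw [Finset.sum_congr rfl (fun s _ => h1 s), sum_bool_card m (fun k : ℕ => |2 * (k:ℝ) - m|)]
  have h2 := sum_abs_ident m hm
  have h3 : ((∑ k ∈ range (m+1), (m.choose k : ℤ) * |(m:ℤ) - 2*k| : ℤ) : ℝ)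
      = ∑ k ∈ range (m+1), (m.choose k : ℝ) * |2 * (k:ℝ) - m| := by
    push_cast
    refine Finset.sum_congr rfl fun k _ => ?_
    rw [abs_sub_comm]
  have h4 : ∑ k ∈ range (m+1), m.choose k • |2 * (k:ℝ) - m|
      = ∑ k ∈ range (m+1), (m.choose k : ℝ) * |2 * (k:ℝ) - m| := by
    refine Finset.sum_congr rfl fun k _ => ?_
    rw [nsmul_eq_mul]
  rw [h4, ← h3, h2]
  push_cast
  ring

lemma radE_abs_sum (m : ℕ) (hm : 1 ≤ m) :
    radE m (fun ε => |∑ i : Fin m, ε i|)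
      = 2 * m * Nat.choose (m-1) ((m-1)/2) / 2^m := by
  unfold radE signVec
  rw [sum_abs_signVec m hm]

lemma radE_abs_lower (m : ℕ) (hm : 1 ≤ m) :
    Real.sqrt m / Real.sqrt 2 ≤ radE m (fun ε => |∑ i : Fin m, ε i|) := by
  rw [radE_abs_sum m hm]
  set t := m - 1 with ht
  have hmt : m = t + 1 := by omega
  set C : ℝ := (Nat.choose t (t/2) : ℝ) with hC
  have hCpos : 0 < C := by
    rw [hC]
    exact_mod_cast Nat.choose_pos (Nat.div_le_self t 2)
  have hX : 2 * (m:ℝ) * C / 2^m = (m:ℝ) * C / 2^t := by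
    rw [hmt]
    push_cast
    rw [pow_succ]
    field_simp
  rw [hX]
  have hXpos : 0 < (m:ℝ) * C / 2^t := by positivity
  have hkey : (m:ℝ) / 2 ≤ ((m:ℝ) * C / 2^t)^2 := by
    have hnat := main_nat_ineq t
    have hnatr : (4:ℝ)^t ≤ 2*((t:ℝ)+1) * C^2 := by rw [hC]; exact_mod_cast hnat
    have h4 : (4:ℝ)^t = (2^t)^2 := by
      rw [show (4:ℝ) = 2^2 by norm_num, ← pow_mul, ← pow_mul, Nat.mul_comm]
    rw [div_pow, mul_pow]
    rw [div_le_div_iff₀ (by norm_num) (by positivity)]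
    have hm1 : (m:ℝ) = (t:ℝ) + 1 := by rw [hmt]; push_cast; ring
    calc (m:ℝ) * (2^t)^2 = (m:ℝ) * (4:ℝ)^t := by rw [h4]
      _ ≤ (m:ℝ) * (2*(t+1)*C^2) := by
          apply mul_le_mul_of_nonneg_left hnatr (by positivity)
      _ = (m:ℝ)^2 * C^2 * 2 := by rw [hm1]; ring
  have h5 : Real.sqrt m / Real.sqrt 2 = Real.sqrt ((m:ℝ)/2) := by
    rw [Real.sqrt_div (by positivity : (0:ℝ) ≤ (m:ℝ))]
  rw [h5]
  calc Real.sqrt ((m:ℝ)/2) ≤ Real.sqrt (((m:ℝ) * C / 2^t)^2) := Real.sqrt_le_sqrt hkey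
    _ = (m:ℝ) * C / 2^t := Real.sqrt_sq hXpos.le

end Aux


/-- the empirical Rademacher complexity of the class of linear
two-layer networks `x ↦ L² c ⟪x, w⟫`, with `‖w‖₂ ≤ R`, `|c| ≤ D`, on the sample
`x₁ = ⋯ = x_m = B e₁`, equals `L² B R D · E|∑ ε_i| / m`, which is at least
`L² B R D / (√2 √m)`. -/
theorem radE_linear_class_lower_bound {d m : ℕ} (hm : 0 < m)
    (L B R D : ℝ) (hL : 0 < L) (hB : 0 < B) (hR : 0 < R) (hD : 0 < D) :
    radE m (fun ε => (1 / m) *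
        ⨆ p : {w : EuclideanSpace ℝ (Fin (d + 1)) // ‖w‖ ≤ R} × {c : ℝ // |c| ≤ D},
          |∑ i : Fin m, ε i *
            (L ^ 2 * (p.2 : ℝ) *
              ⟪(B • EuclideanSpace.single (0 : Fin (d + 1)) (1 : ℝ)),
                (p.1 : EuclideanSpace ℝ (Fin (d + 1)))⟫)|)
      = L ^ 2 * B * R * D * radE m (fun ε => |∑ i : Fin m, ε i|) / m ∧
    L ^ 2 * B * R * D * radE m (fun ε => |∑ i : Fin m, ε i|) / m ≥
      L ^ 2 * B * R * D / (Real.sqrt 2 * Real.sqrt m) := by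
  have hm1 : 1 ≤ m := hm
  constructor
  · unfold radE
    have hcong : ∀ s : Fin m → Bool, (1 / (m:ℝ)) *
        (⨆ p : {w : EuclideanSpace ℝ (Fin (d + 1)) // ‖w‖ ≤ R} × {c : ℝ // |c| ≤ D},
          |∑ i : Fin m, signVec m s i *
            (L ^ 2 * (p.2 : ℝ) *
              ⟪(B • EuclideanSpace.single (0 : Fin (d + 1)) (1 : ℝ)),
                (p.1 : EuclideanSpace ℝ (Fin (d + 1)))⟫)|)
        = (1 / (m:ℝ)) * (L ^ 2 * B * R * D * |∑ i : Fin m, signVec m s i|) := by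
      intro s
      rw [sup_eval L B R D hL hB hR hD]
    rw [Finset.sum_congr rfl (fun s _ => hcong s)]
    rw [← Finset.mul_sum]
    have hmne : (m:ℝ) ≠ 0 := by positivity
    field_simp
    rw [← Finset.mul_sum]
  · have hE := radE_abs_lower m hm1
    set E := radE m (fun ε => |∑ i : Fin m, ε i|) with hEdef
    have hK : (0:ℝ) < L ^ 2 * B * R * D := by positivity
    have hs2 : (0:ℝ) < Real.sqrt 2 := by positivity
    have hsm : (0:ℝ) < Real.sqrt m := Real.sqrt_pos.2 (by exact_mod_cast hm)
    have hmpos : (0:ℝ) < m := by exact_mod_cast hm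
    rw [ge_iff_le, div_le_div_iff₀ (by positivity) hmpos]
    calc L ^ 2 * B * R * D * (m:ℝ)
        = (L ^ 2 * B * R * D * (Real.sqrt 2 * Real.sqrt m)) * (Real.sqrt m / Real.sqrt 2) := by
          have hss : Real.sqrt m * Real.sqrt m = (m:ℝ) := Real.mul_self_sqrt hmpos.le
          field_simp
          linear_combination (-1 : ℝ) * hss
      _ ≤ (L ^ 2 * B * R * D * (Real.sqrt 2 * Real.sqrt m)) * E := by
          apply mul_le_mul_of_nonneg_left hE (by positivity)
      _ = L ^ 2 * B * R * D * E * (Real.sqrt 2 * Real.sqrt m) := by ring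
end
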